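/- Let b = (√3 − 1)/2, and define f : [0,1] → ℝ by f(x) = 1/2 + b² − b − |x − b| and f' : [0,1] → ℝ by f'(x) = f(1 − x). Then f and f' both belong to L₀ (each is 1-Lipschitz with integral 0 over [0,1]), and for every x ∈ [0,1]: (|f(x)| + |f'(x)|)/2 ≥ 1 − √3/2, with equality at x = 1/2. (Consequently, for any probability measure μ on [0,1], at least one of ∫|f| dμ and ∫|f'| dμ is at least 1 − √3/2.) -/

import Mathlib

/-!
Both functions are tents `c - |x - a|`, with peaks at `a = b` and `a = 1 - b` and the same height
`c = 1/2 + b² - b`. Since `∫₀¹ |x - a| = a² - a + 1/2` is invariant under `a ↦ 1 - a`, this height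
makes both of them mean zero. Between the peaks `|f| + |f'| ≥ |f + f'| = 2b²`, outside them
`|f| + |f'| ≥ |f - f'| = 1 - 2b`, and `b = (√3 - 1)/2` is the root of `b² + b = 1/2`, where the
two bounds agree.
-/

open Set

def tent (c a x : ℝ) : ℝ := c - |x - a|

lemma abs_tent_sub_tent_le (c a x y : ℝ) : |tent c a x - tent c a y| ≤ |x - y| := by
  rw [tent, tent, sub_sub_sub_cancel_left, abs_sub_comm]
  simpa using abs_abs_sub_abs_le_abs_sub (x - a) (y - a)

lemma integral_abs_sub_of_mem_Icc {a : ℝ} (ha : a ∈ Icc (0 : ℝ) 1) :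
    ∫ x in (0 : ℝ)..1, |x - a| = a ^ 2 - a + 1 / 2 := by
  have hintegrable : ∀ u v : ℝ, IntervalIntegrable (fun x => |x - a|) MeasureTheory.volume u v :=
    fun u v => (continuous_sub_right a).abs.intervalIntegrable u v
  have left : ∫ x in (0 : ℝ)..a, |x - a| = ∫ x in (0 : ℝ)..a, (a - x) := by
    refine intervalIntegral.integral_congr fun x hx => ?_
    rw [uIcc_of_le ha.1] at hx
    simp only [abs_of_nonpos (sub_nonpos.2 hx.2), neg_sub]
  have right : ∫ x in a..(1 : ℝ), |x - a| = ∫ x in a..(1 : ℝ), (x - a) :=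
    intervalIntegral.integral_congr fun x hx => by
      rw [uIcc_of_le ha.2] at hx
      exact abs_of_nonneg (sub_nonneg.2 hx.1)
  rw [← intervalIntegral.integral_add_adjacent_intervals (hintegrable 0 a) (hintegrable a 1),
    left, right, intervalIntegral.integral_comp_sub_left (fun x => x) a,
    intervalIntegral.integral_comp_sub_right (fun x => x) a, integral_id, integral_id]
  ring

lemma integral_tent {a : ℝ} (c : ℝ) (ha : a ∈ Icc (0 : ℝ) 1) :
    ∫ x in (0 : ℝ)..1, tent c a x = c - (a ^ 2 - a + 1 / 2) := by
  rw [← integral_abs_sub_of_mem_Icc ha]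
  simp only [tent]
  rw [intervalIntegral.integral_sub intervalIntegrable_const
    ((continuous_sub_right a).abs.intervalIntegrable 0 1)]
  simp

lemma two_mul_sq_le_abs_tent_add_abs_tent {b : ℝ} (hb : b ^ 2 + b = 1 / 2) (x : ℝ) :
    2 * b ^ 2 ≤ |tent (1 / 2 + b ^ 2 - b) b x| + |tent (1 / 2 + b ^ 2 - b) (1 - b) x| := by
  unfold tent
  have := sq_nonneg b
  have := le_abs_self (1 / 2 + b ^ 2 - b - |x - b|)
  have := neg_abs_le (1 / 2 + b ^ 2 - b - |x - b|)
  have := le_abs_self (1 / 2 + b ^ 2 - b - |x - (1 - b)|)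
  have := neg_abs_le (1 / 2 + b ^ 2 - b - |x - (1 - b)|)
  rcases abs_cases (x - b) with ⟨_, _⟩ | ⟨_, _⟩ <;>
  rcases abs_cases (x - (1 - b)) with ⟨_, _⟩ | ⟨_, _⟩ <;>
  linarith

/-- With b = (√3 − 1)/2, the functions f(x) = 1/2 + b² − b − |x − b|
and f'(x) = f(1 − x) are mean-zero 1-Lipschitz on [0,1]; their pointwise average
absolute value is at least 1 − √3/2 everywhere on [0,1], with equality at x = 1/2. -/
theorem stmt_11 (b : ℝ) (hb : b = (Real.sqrt 3 - 1) / 2)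
    (f f' : ℝ → ℝ)
    (hf : ∀ x, f x = 1 / 2 + b ^ 2 - b - |x - b|)
    (hf' : ∀ x, f' x = f (1 - x)) :
    ((∀ x ∈ Set.Icc (0 : ℝ) 1, ∀ y ∈ Set.Icc (0 : ℝ) 1, |f x - f y| ≤ |x - y|) ∧
      (∫ x in (0 : ℝ)..1, f x = 0)) ∧
    ((∀ x ∈ Set.Icc (0 : ℝ) 1, ∀ y ∈ Set.Icc (0 : ℝ) 1, |f' x - f' y| ≤ |x - y|) ∧
      (∫ x in (0 : ℝ)..1, f' x = 0)) ∧
    (∀ x ∈ Set.Icc (0 : ℝ) 1, 1 - Real.sqrt 3 / 2 ≤ (|f x| + |f' x|) / 2) ∧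
    (|f (1 / 2)| + |f' (1 / 2)|) / 2 = 1 - Real.sqrt 3 / 2 := by
  have h3 := Real.sq_sqrt (show (0 : ℝ) ≤ 3 by norm_num)
  have hb_sq : b ^ 2 = 1 - Real.sqrt 3 / 2 := by rw [hb]; linear_combination h3 / 4
  have hb_root : b ^ 2 + b = 1 / 2 := by rw [hb_sq, hb]; ring
  have hb_half : 0 ≤ b ∧ b ≤ 1 / 2 := by
    constructor <;> nlinarith [Real.sqrt_nonneg 3]
  obtain rfl : f = tent (1 / 2 + b ^ 2 - b) b := funext hf
  obtain rfl : f' = tent (1 / 2 + b ^ 2 - b) (1 - b) :=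
    funext fun x => by rw [hf', tent, tent, ← abs_neg]; ring_nf
  rw [← hb_sq]
  refine ⟨⟨fun x _ y _ => abs_tent_sub_tent_le _ _ x y, ?_⟩,
    ⟨fun x _ y _ => abs_tent_sub_tent_le _ _ x y, ?_⟩,
    fun x _ => by linarith [two_mul_sq_le_abs_tent_add_abs_tent hb_root x], ?_⟩
  · rw [integral_tent _ ⟨hb_half.1, by linarith⟩]; ring
  · rw [integral_tent _ ⟨by linarith, by linarith⟩]; ring
  · have h₁ : tent (1 / 2 + b ^ 2 - b) b (1 / 2) = b ^ 2 := by
      rw [tent, abs_of_nonneg (by linarith)]; ring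
    have h₂ : tent (1 / 2 + b ^ 2 - b) (1 - b) (1 / 2) = b ^ 2 := by
      rw [tent, abs_of_nonpos (by linarith)]; ring
    rw [h₁, h₂, abs_sq]
    ring
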